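/- Let M, L > 0, E ∈ (-M²/(2L), 0), and let r₋(E) < r₊(E) be the two roots of Ψ⁰(r) = E where Ψ⁰(r) = -M/r + L/(2r²). Then for all r ∈ [r₋(E), r₊(E)], the concavity estimate E - Ψ⁰(r) ≥ L·(r₊(E) - r)·(r - r₋(E)) / (2r²·r₋(E)·r₊(E)) holds. -/

import Mathlib

theorem quadratic_eq_mul_sub_mul_sub {R : Type*} [CommRing R] [NoZeroDivisors R]
    {a b c x₁ x₂ : R} (hne : x₁ ≠ x₂)
    (h₁ : a * x₁ ^ 2 + b * x₁ + c = 0) (h₂ : a * x₂ ^ 2 + b * x₂ + c = 0) (x : R) :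
    a * x ^ 2 + b * x + c = a * (x - x₁) * (x - x₂) := by
  have hsum : b = -a * (x₁ + x₂) := by
    have : (x₁ - x₂) * (a * (x₁ + x₂) + b) = 0 := by linear_combination h₁ - h₂
    linear_combination (mul_eq_zero.mp this).resolve_left (sub_ne_zero.mpr hne)
  linear_combination h₁ + (x - x₁) * hsum

noncomputable def effPotential (M L r : ℝ) : ℝ := -M / r + L / (2 * r ^ 2)

theorem sub_effPotential_eq {M L E r : ℝ} (hr : r ≠ 0) :
    E - effPotential M L r = (2 * E * r ^ 2 + 2 * M * r + -L) / (2 * r ^ 2) := by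
  unfold effPotential
  field_simp
  ring

theorem effPotential_eq_iff {M L E r : ℝ} (hr : r ≠ 0) :
    effPotential M L r = E ↔ 2 * E * r ^ 2 + 2 * M * r + -L = 0 := by
  rw [eq_comm, ← sub_eq_zero, sub_effPotential_eq hr, div_eq_zero_iff]
  simp [hr]

/-- The concavity estimate is an identity: `2 r² (E - Ψ⁰ r)` is a quadratic in `r` with roots
`r₋, r₊` and constant term `-L`, which fixes its leading coefficient to `-L / (r₋ r₊)`. -/
theorem sub_effPotential_eq_of_roots {M L E rm rp r : ℝ} (hrm : rm ≠ 0) (hrp : rp ≠ 0)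
    (hne : rm ≠ rp) (h₁ : effPotential M L rm = E) (h₂ : effPotential M L rp = E)
    (hr : r ≠ 0) :
    E - effPotential M L r = L * (rp - r) * (r - rm) / (2 * r ^ 2 * rm * rp) := by
  have hfactor := quadratic_eq_mul_sub_mul_sub hne
    ((effPotential_eq_iff hrm).mp h₁) ((effPotential_eq_iff hrp).mp h₂)
  have hL : L = -(2 * E) * rm * rp := by linear_combination -(hfactor 0)
  rw [sub_effPotential_eq hr, hfactor r, hL]
  field_simp
  ring

theorem stmt_10_general (M L E : ℝ)
    (Ψ : ℝ → ℝ) (hΨ : ∀ r, Ψ r = -M / r + L / (2 * r ^ 2))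
    (rm rp : ℝ) (hrm₀ : 0 < rm) (hrmrp : rm < rp)
    (hroot₁ : Ψ rm = E) (hroot₂ : Ψ rp = E) :
    ∀ r ∈ Set.Icc rm rp,
      L * (rp - r) * (r - rm) / (2 * r ^ 2 * rm * rp) ≤ E - Ψ r := by
  obtain rfl : Ψ = effPotential M L := funext hΨ
  intro r hr
  exact (sub_effPotential_eq_of_roots hrm₀.ne' (hrm₀.trans hrmrp).ne' hrmrp.ne hroot₁ hroot₂
    (hrm₀.trans_le hr.1).ne').ge

theorem stmt_10 (M L E : ℝ) (hM : 0 < M) (hL : 0 < L)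
    (hE₁ : -M ^ 2 / (2 * L) < E) (hE₂ : E < 0)
    (Ψ : ℝ → ℝ) (hΨ : ∀ r, Ψ r = -M / r + L / (2 * r ^ 2))
    (rm rp : ℝ) (hrm₀ : 0 < rm) (hrmrp : rm < rp)
    (hroot₁ : Ψ rm = E) (hroot₂ : Ψ rp = E) :
    ∀ r ∈ Set.Icc rm rp,
      L * (rp - r) * (r - rm) / (2 * r ^ 2 * rm * rp) ≤ E - Ψ r :=
  stmt_10_general M L E Ψ hΨ rm rp hrm₀ hrmrp hroot₁ hroot₂
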